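/- arXiv:math/0607485 — 2 statements merged into one kernel-verified Lean document; each statement's English description precedes it below -/
import Mathlib

section
/- (Laplace-type estimate of the center height) Let u be a solution of the capillary equation on [0, a] with u(0) = u₀ > 0, u'(0) = 0 and contact angle condition sin ψ(a) = cos γ for some γ ∈ [0, π/2). Then cos γ/(a κ) − a/cos γ + (a tan γ)/2 + (a/(2 cos² γ))(π/2 − γ) < u₀ < cos γ/(a κ). -/
/-!
With `ψ = arctan u'` the inclination angle, the capillary equation says `(sin ψ)' = κ u`.
A first-zero argument shows that `u` stays positive, so `u'' > 0` and `u` increases strictly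
from `u₀`. Integrating `(sin ψ)' = κ u` gives `κ ∫₀ᵃ u = cos γ`, and `∫₀ᵃ u > a u₀` is the upper
bound. As `κ u` increases, `sin ψ` is strictly convex and vanishes at `0`, so it lies below its
chord: `sin ψ(r) < r / R` with `R = a / cos γ`. This is the inclination of the circle of radius `R`
tangent to the horizontal at the axis, so `u - u₀` lies below that circular arc, and integrating
the arc gives the lower bound.
-/

open Real Set intervalIntegral

lemma strictMonoOn_Icc_of_deriv_nonneg_of_deriv2_pos {u : ℝ → ℝ} {b c : ℝ}
    (hu : Differentiable ℝ u) (hu' : Differentiable ℝ (deriv u)) (hb : 0 ≤ deriv u b)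
    (h2 : ∀ x ∈ Ioo b c, 0 < deriv (deriv u) x) : StrictMonoOn u (Icc b c) := by
  have hv : StrictMonoOn (deriv u) (Icc b c) :=
    strictMonoOn_of_deriv_pos (convex_Icc b c) hu'.continuous.continuousOn (by rwa [interior_Icc])
  refine strictMonoOn_of_deriv_pos (convex_Icc b c) hu.continuous.continuousOn fun x hx => ?_
  rw [interior_Icc] at hx
  exact hb.trans_lt (hv (left_mem_Icc.2 (hx.1.trans hx.2).le) (Ioo_subset_Icc_self hx) hx.1)

lemma pos_on_Icc_of_deriv2_pos_of_pos {u : ℝ → ℝ} {b c : ℝ}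
    (hu : Differentiable ℝ u) (hu' : Differentiable ℝ (deriv u)) (hub : 0 < u b)
    (hb : 0 ≤ deriv u b) (h2 : ∀ x ∈ Icc b c, 0 < u x → 0 < deriv (deriv u) x) :
    ∀ x ∈ Icc b c, 0 < u x := by
  by_contra! h
  have hZ : IsCompact {x ∈ Icc b c | u x ≤ 0} :=
    isCompact_Icc.inter_right (isClosed_le hu.continuous continuous_const)
  obtain ⟨x₀, ⟨hx₀, hux₀⟩, hmin⟩ := hZ.exists_isLeast h
  have hpos : ∀ x ∈ Ico b x₀, 0 < u x := fun x hx =>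
    lt_of_not_ge fun hux => hx.2.not_ge (hmin ⟨⟨hx.1, hx.2.le.trans hx₀.2⟩, hux⟩)
  -- `u` is convex up to its first zero `x₀`, hence increasing there: `u x₀ ≥ u b > 0`.
  have hmono : StrictMonoOn u (Icc b x₀) :=
    strictMonoOn_Icc_of_deriv_nonneg_of_deriv2_pos hu hu' hb fun x hx =>
      h2 x ⟨hx.1.le, hx.2.le.trans hx₀.2⟩ (hpos x ⟨hx.1.le, hx.2⟩)
  have := hmono.monotoneOn (left_mem_Icc.2 hx₀.1) (right_mem_Icc.2 hx₀.1) hx₀.1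
  linarith

lemma lt_secant_of_hasDerivAt_of_strictMonoOn {f f' : ℝ → ℝ} {a r : ℝ}
    (hf : ∀ x ∈ Icc 0 a, HasDerivAt f (f' x) x) (hf' : StrictMonoOn f' (Icc 0 a))
    (hr : r ∈ Ioo 0 a) : f r < (1 - r / a) * f 0 + r / a * f a := by
  have ha : 0 < a := hr.1.trans hr.2
  have hconv : StrictConvexOn ℝ (Icc 0 a) f := by
    refine StrictMonoOn.strictConvexOn_of_deriv (convex_Icc 0 a)
      (fun x hx => (hf x hx).continuousAt.continuousWithinAt) ?_
    rw [interior_Icc]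
    exact (hf'.mono Ioo_subset_Icc_self).congr fun x hx =>
      ((hf x (Ioo_subset_Icc_self hx)).deriv).symm
  have := hconv.2 (left_mem_Icc.2 ha.le) (right_mem_Icc.2 ha.le) ha.ne
    (sub_pos.2 ((div_lt_one ha).2 hr.2)) (div_pos hr.1 ha) (sub_add_cancel 1 (r / a))
  simpa [div_mul_cancel₀ r ha.ne'] using this

lemma sub_lt_sub_of_hasDerivAt_lt {f g f' g' : ℝ → ℝ} {a b : ℝ} (hab : a < b)
    (hf : ContinuousOn f (Icc a b)) (hg : ContinuousOn g (Icc a b))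
    (hf' : ∀ x ∈ Ioo a b, HasDerivAt f (f' x) x) (hg' : ∀ x ∈ Ioo a b, HasDerivAt g (g' x) x)
    (hlt : ∀ x ∈ Ioo a b, f' x < g' x) : f b - f a < g b - g a := by
  have hmono : StrictMonoOn (fun x => g x - f x) (Icc a b) :=
    strictMonoOn_of_deriv_pos (convex_Icc a b) (hg.sub hf) fun x hx => by
      rw [interior_Icc] at hx
      rw [((hg' x hx).fun_sub (hf' x hx)).deriv]
      exact sub_pos.2 (hlt x hx)
  linarith [hmono (left_mem_Icc.2 hab.le) (right_mem_Icc.2 hab.le) hab]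

lemma integral_sub_pos_of_strictMonoOn {u : ℝ → ℝ} {a b : ℝ} (hab : a < b)
    (hu : ContinuousOn u (Icc a b)) (hmono : StrictMonoOn u (Icc a b)) :
    0 < ∫ x in a..b, (u x - u a) := by
  have h := integral_lt_integral_of_continuousOn_of_le_of_exists_lt hab continuousOn_const
    (hu.sub continuousOn_const)
    (fun x hx => sub_nonneg.2 (hmono.monotoneOn (left_mem_Icc.2 hab.le) (Ioc_subset_Icc_self hx)
      hx.1.le))
    ⟨b, right_mem_Icc.2 hab.le,
      sub_pos.2 (hmono (left_mem_Icc.2 hab.le) (right_mem_Icc.2 hab.le) hab)⟩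
  simpa using h

lemma hasDerivAt_div_sqrt_one_add_sq (x : ℝ) :
    HasDerivAt (fun y => y / √(1 + y ^ 2)) ((1 + x ^ 2) ^ ((3 : ℝ) / 2))⁻¹ x := by
  have h := (hasDerivAt_arctan x).sin
  simp only [sin_arctan, cos_arctan] at h
  convert h using 1
  rw [show (3 : ℝ) / 2 = 1 + 1 / 2 by norm_num, rpow_add (by positivity), rpow_one,
    ← sqrt_eq_rpow]
  field_simp

lemma div_sqrt_one_add_sq_lt_one (x : ℝ) : x / √(1 + x ^ 2) < 1 :=
  (div_lt_one (by positivity)).2 (lt_sqrt_of_sq_lt (by linarith))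

-- `x ↦ x / √(1 + x²)` is `sin ∘ arctan`, whose inverse on `(-1, 1)` is `tan ∘ arcsin`.
lemma lt_div_sqrt_one_sub_sq_of_div_sqrt_one_add_sq_lt {x m : ℝ} (hm : m < 1)
    (h : x / √(1 + x ^ 2) < m) : x < m / √(1 - m ^ 2) := by
  rw [← sin_arctan] at h
  have hm' : -1 < m := (neg_one_le_sin _).trans_lt h
  rw [← tan_arcsin]
  refine sin_arctan_strictMono.lt_iff_lt.1 ?_
  rwa [arctan_tan (neg_pi_div_two_lt_arcsin.2 hm') (arcsin_lt_pi_div_two.2 hm),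
    sin_arcsin hm'.le hm.le]

lemma hasDerivAt_mul_sqrt_one_sub_sq_add_arcsin {t : ℝ} (ht : t ^ 2 < 1) :
    HasDerivAt (fun t => (t * √(1 - t ^ 2) + arcsin t) / 2) (√(1 - t ^ 2)) t := by
  have hs : 0 < √(1 - t ^ 2) := sqrt_pos.2 (by linarith)
  have ht' : |t| < 1 := by rwa [← sq_lt_one_iff_abs_lt_one]
  have h := (((hasDerivAt_id' t).fun_mul ((((hasDerivAt_id' t).fun_pow 2).const_sub 1).sqrt
    (by linarith))).fun_add
    (hasDerivAt_arcsin (x := t) (by linarith [neg_abs_le t])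
      (ne_of_lt (by linarith [le_abs_self t])))).div_const 2
  refine h.congr_deriv ?_
  have hsq : √(1 - t ^ 2) ^ 2 = 1 - t ^ 2 := sq_sqrt (by linarith)
  norm_num
  field_simp
  linear_combination -hsq

lemma integral_one_sub_sqrt_one_sub_sq {m : ℝ} (h0 : 0 ≤ m) (h1 : m ≤ 1) :
    ∫ t in 0..m, (1 - √(1 - t ^ 2)) = m - (m * √(1 - m ^ 2) + arcsin m) / 2 := by
  rw [integral_eq_sub_of_hasDerivAt_of_le h0 (by fun_prop) (fun t ht =>
      (hasDerivAt_id' t).sub (hasDerivAt_mul_sqrt_one_sub_sq_add_arcsin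
        (by nlinarith [ht.1, ht.2])))
      ((by fun_prop : Continuous fun t : ℝ => 1 - √(1 - t ^ 2)).intervalIntegrable _ _)]
  simp

/-- Height at horizontal distance `r` from the axis of the circle of radius `R` that is tangent to
the horizontal on the axis; its inclination angle `ψ` satisfies `sin ψ = r / R`. -/
noncomputable def arcHeight (R r : ℝ) : ℝ := R * (1 - √(1 - (r / R) ^ 2))

lemma continuous_arcHeight (R : ℝ) : Continuous (arcHeight R) := by
  unfold arcHeight
  fun_prop

lemma hasDerivAt_arcHeight {R r : ℝ} (hR : 0 < R) (hr : (r / R) ^ 2 < 1) :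
    HasDerivAt (arcHeight R) (r / R / √(1 - (r / R) ^ 2)) r := by
  have hs : 0 < √(1 - (r / R) ^ 2) := sqrt_pos.2 (by linarith)
  have h := (((((hasDerivAt_id' r).div_const R).fun_pow 2).const_sub 1).sqrt
    (by linarith)).const_sub 1 |>.const_mul R
  refine h.congr_deriv ?_
  generalize √(1 - (r / R) ^ 2) = s at hs ⊢
  norm_num
  field_simp

lemma integral_arcHeight {R a : ℝ} (hR : 0 < R) (ha : 0 ≤ a) (haR : a ≤ R) :
    ∫ r in 0..a, arcHeight R r =
      R ^ 2 * (a / R - (a / R * √(1 - (a / R) ^ 2) + arcsin (a / R)) / 2) := by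
  simp only [arcHeight]
  rw [integral_const_mul, integral_comp_div (fun t => 1 - √(1 - t ^ 2)) hR.ne', zero_div,
    integral_one_sub_sqrt_one_sub_sq (by positivity) ((div_le_one hR).2 haR), smul_eq_mul]
  ring

lemma integral_arcHeight_div_cos {a γ : ℝ} (ha : 0 < a) (hγ0 : 0 ≤ γ) (hγ1 : γ < π / 2) :
    ∫ r in 0..a, arcHeight (a / cos γ) r =
      (a / cos γ) ^ 2 * (cos γ - (cos γ * sin γ + (π / 2 - γ)) / 2) := by
  have hc : 0 < cos γ := cos_pos_of_mem_Ioo ⟨by linarith [pi_pos], hγ1⟩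
  rw [integral_arcHeight (div_pos ha hc) ha.le (le_div_self ha.le hc (cos_le_one γ)),
    div_div_cancel₀ ha.ne', ← sin_sq, sqrt_sq (sin_nonneg_of_nonneg_of_le_pi hγ0 (by linarith)),
    arcsin_eq_pi_div_two_sub_arccos, arccos_cos hγ0 (by linarith)]

def CapillaryEqOn (κ a : ℝ) (u : ℝ → ℝ) : Prop :=
  ∀ r ∈ Icc 0 a, deriv (deriv u) r = κ * u r * (1 + deriv u r ^ 2) ^ ((3 : ℝ) / 2)

/-- `sin ψ` for the inclination angle `ψ = arctan u'` of the graph of `u`. -/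
noncomputable def sinInclination (u : ℝ → ℝ) (r : ℝ) : ℝ := deriv u r / √(1 + deriv u r ^ 2)

section Capillary

variable {κ a : ℝ} {u : ℝ → ℝ}

lemma CapillaryEqOn.strictMonoOn (hode : CapillaryEqOn κ a u) (hκ : 0 < κ)
    (hu : Differentiable ℝ u) (hu' : Differentiable ℝ (deriv u)) (hu0 : 0 < u 0)
    (hdu0 : deriv u 0 = 0) : StrictMonoOn u (Icc 0 a) := by
  have h2 : ∀ x ∈ Icc 0 a, 0 < u x → 0 < deriv (deriv u) x := fun x hx hux => by
    rw [hode x hx]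
    positivity
  have hpos := pos_on_Icc_of_deriv2_pos_of_pos hu hu' hu0 hdu0.ge h2
  exact strictMonoOn_Icc_of_deriv_nonneg_of_deriv2_pos hu hu' hdu0.ge fun x hx =>
    h2 x (Ioo_subset_Icc_self hx) (hpos x (Ioo_subset_Icc_self hx))

lemma CapillaryEqOn.hasDerivAt_sinInclination (hode : CapillaryEqOn κ a u)
    (hu' : Differentiable ℝ (deriv u)) {r : ℝ} (hr : r ∈ Icc 0 a) :
    HasDerivAt (sinInclination u) (κ * u r) r := by
  refine ((hasDerivAt_div_sqrt_one_add_sq (deriv u r)).comp r (hu' r).hasDerivAt).congr_deriv ?_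
  rw [hode r hr, mul_comm (κ * u r), inv_mul_cancel_left₀ (by positivity)]

lemma CapillaryEqOn.integral_eq_sinInclination (hode : CapillaryEqOn κ a u)
    (hu : Differentiable ℝ u) (hu' : Differentiable ℝ (deriv u)) (hdu0 : deriv u 0 = 0)
    (ha : 0 ≤ a) : κ * ∫ r in 0..a, u r = sinInclination u a := by
  rw [← integral_const_mul, integral_eq_sub_of_hasDerivAt
    (fun r hr => hode.hasDerivAt_sinInclination hu' (by rwa [uIcc_of_le ha] at hr))
    ((continuous_const.mul hu.continuous).intervalIntegrable _ _)]
  simp [sinInclination, hdu0]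

lemma CapillaryEqOn.sinInclination_lt_secant (hode : CapillaryEqOn κ a u) (hκ : 0 < κ)
    (hu : Differentiable ℝ u) (hu' : Differentiable ℝ (deriv u)) (hu0 : 0 < u 0)
    (hdu0 : deriv u 0 = 0) {r : ℝ} (hr : r ∈ Ioo 0 a) :
    sinInclination u r < r / a * sinInclination u a := by
  have hmono := hode.strictMonoOn hκ hu hu' hu0 hdu0
  have h := lt_secant_of_hasDerivAt_of_strictMonoOn
    (fun x hx => hode.hasDerivAt_sinInclination hu' hx)
    (fun x hx y hy hxy => mul_lt_mul_of_pos_left (hmono hx hy hxy) hκ) hr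
  simpa [sinInclination, hdu0] using h

lemma CapillaryEqOn.sub_lt_arcHeight (hode : CapillaryEqOn κ a u) (hκ : 0 < κ)
    (hu : Differentiable ℝ u) (hu' : Differentiable ℝ (deriv u)) (hu0 : 0 < u 0)
    (hdu0 : deriv u 0 = 0) (hs : 0 < sinInclination u a) {r : ℝ} (hr : r ∈ Ioc 0 a) :
    u r - u 0 < arcHeight (a / sinInclination u a) r := by
  set s := sinInclination u a
  have ha : 0 < a := hr.1.trans_le hr.2
  have hs1 : s < 1 := div_sqrt_one_add_sq_lt_one _
  have hm : ∀ x ∈ Ioo 0 r, x / (a / s) = x / a * s ∧ 0 < x / a * s ∧ x / a * s < 1 :=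
    fun x hx => by
      have hxa : x / a < 1 := (div_lt_one ha).2 (hx.2.trans_le hr.2)
      refine ⟨by field_simp, by have := hx.1; positivity, by nlinarith [div_pos hx.1 ha]⟩
  have h := sub_lt_sub_of_hasDerivAt_lt hr.1 hu.continuous.continuousOn
    (continuous_arcHeight _).continuousOn (fun x _ => (hu x).hasDerivAt)
    (fun x hx => hasDerivAt_arcHeight (div_pos ha hs) (by nlinarith [hm x hx])) fun x hx => ?_
  · simpa [arcHeight] using h
  · rw [(hm x hx).1]
    exact lt_div_sqrt_one_sub_sq_of_div_sqrt_one_add_sq_lt (hm x hx).2.2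
      (hode.sinInclination_lt_secant hκ hu hu' hu0 hdu0 ⟨hx.1, hx.2.trans_le hr.2⟩)

lemma CapillaryEqOn.integral_sub_lt_integral_arcHeight (hode : CapillaryEqOn κ a u)
    (hκ : 0 < κ) (hu : Differentiable ℝ u) (hu' : Differentiable ℝ (deriv u)) (hu0 : 0 < u 0)
    (hdu0 : deriv u 0 = 0) (ha : 0 < a) (hs : 0 < sinInclination u a) :
    ∫ r in 0..a, (u r - u 0) < ∫ r in 0..a, arcHeight (a / sinInclination u a) r :=
  integral_lt_integral_of_continuousOn_of_le_of_exists_lt ha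
    (hu.continuous.continuousOn.sub continuousOn_const) (continuous_arcHeight _).continuousOn
    (fun _ hr => (hode.sub_lt_arcHeight hκ hu hu' hu0 hdu0 hs hr).le)
    ⟨a, right_mem_Icc.2 ha.le, hode.sub_lt_arcHeight hκ hu hu' hu0 hdu0 hs ⟨ha, le_rfl⟩⟩

end Capillary

/-- Laplace-type estimate of the center height:
cos γ/(aκ) − a/cos γ + (a tan γ)/2 + (a/(2cos²γ))(π/2 − γ) < u₀ < cos γ/(aκ). -/
theorem stmt_13 (κ a u₀ γ : ℝ) (hκ : 0 < κ) (ha : 0 < a) (u : ℝ → ℝ)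
    (hu : Differentiable ℝ u) (hu' : Differentiable ℝ (deriv u))
    (hode : ∀ r ∈ Set.Icc (0 : ℝ) a,
      deriv (deriv u) r = κ * u r * (1 + (deriv u r) ^ 2) ^ ((3 : ℝ) / 2))
    (hu0 : u 0 = u₀) (hu₀pos : 0 < u₀) (hdu0 : deriv u 0 = 0)
    (hγ0 : 0 ≤ γ) (hγ1 : γ < Real.pi / 2)
    (hangle : deriv u a / Real.sqrt (1 + (deriv u a) ^ 2) = Real.cos γ) :
    Real.cos γ / (a * κ) - a / Real.cos γ + a * Real.tan γ / 2 +
      (a / (2 * (Real.cos γ) ^ 2)) * (Real.pi / 2 - γ) < u₀ ∧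
    u₀ < Real.cos γ / (a * κ) := by
  subst hu0
  have hcap : CapillaryEqOn κ a u := hode
  have hc : 0 < cos γ := cos_pos_of_mem_Ioo ⟨by linarith [pi_pos], hγ1⟩
  have hs : sinInclination u a = cos γ := hangle
  have hvol : ∫ r in 0..a, (u r - u 0) = cos γ / κ - a * u 0 := by
    rw [integral_sub (hu.continuous.intervalIntegrable _ _) intervalIntegrable_const, ← hs,
      ← hcap.integral_eq_sinInclination hu hu' hdu0 ha.le, mul_div_cancel_left₀ _ hκ.ne']
    simp
  constructor
  · have hlt := hcap.integral_sub_lt_integral_arcHeight hκ hu hu' hu₀pos hdu0 ha (hs ▸ hc)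
    rw [hvol, hs, integral_arcHeight_div_cos ha hγ0 hγ1] at hlt
    have hlhs : cos γ / (a * κ) - a / cos γ + a * tan γ / 2 + a / (2 * cos γ ^ 2) * (π / 2 - γ) =
        (cos γ / κ - (a / cos γ) ^ 2 * (cos γ - (cos γ * sin γ + (π / 2 - γ)) / 2)) / a := by
      rw [tan_eq_sin_div_cos]
      field_simp
      ring
    rw [hlhs, div_lt_iff₀ ha]
    linarith
  · have hpos := integral_sub_pos_of_strictMonoOn ha hu.continuous.continuousOn
      (hcap.strictMonoOn hκ hu hu' hu₀pos hdu0)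
    rw [hvol, sub_pos, lt_div_iff₀ hκ] at hpos
    rw [lt_div_iff₀ (by positivity)]
    linarith
end

section
/- (Meniscus estimates) Let u be a solution of the capillary equation on [0, a] with u(0) = u₀ > 0, u'(0) = 0 and contact angle condition sin ψ(a) = cos γ for some γ ∈ [0, π/2). Then for every r ∈ (0, a): (i) r² κ u₀ / (1 + √(1 − r² κ² u₀²)) < u(r) − u₀ < a/cos γ − √(a²/cos² γ − r²), and (ii) u(a) + a (sin γ/cos γ) − √(a²/cos² γ − r²) < u(r). -/
/-!
The inclination φ = sin ψ = u'/√(1 + u'²) satisfies φ' = κ u. A first-zero argument shows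
u > 0 on [0, a], so u'' > 0 and u increases from u₀. Hence φ' > κ u₀, giving φ(t) > κ u₀ t; and
φ' is increasing, so φ is strictly convex and lies below its chord: φ(t) < t cos γ / a.
A circle of radius R tangent to the horizontal axis at the origin has sin ψ = t / R exactly, and
p ↦ p / √(1 + p²) is increasing, so these bounds compare u' with the slopes of the circles of radii
1 / (κ u₀) and a / cos γ; integrating from 0 to r and from r to a gives the estimates.
-/

open Real Set

/-- `sin ψ` for a curve of slope `p = tan ψ`. -/
noncomputable def inclinationSin (p : ℝ) : ℝ := p / √(1 + p ^ 2)

lemma hasDerivAt_inclinationSin (p : ℝ) :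
    HasDerivAt inclinationSin (1 / ((1 + p ^ 2) * √(1 + p ^ 2))) p := by
  have hw : 0 < 1 + p ^ 2 := by positivity
  have hs : 0 < √(1 + p ^ 2) := sqrt_pos.2 hw
  refine ((hasDerivAt_id' p).div ((hasDerivAt_pow 2 p).const_add 1 |>.sqrt hw.ne')
    hs.ne').congr_deriv ?_
  field_simp
  rw [sq_sqrt hw.le]
  ring

lemma strictMono_inclinationSin : StrictMono inclinationSin :=
  strictMono_of_deriv_pos fun p => by
    rw [(hasDerivAt_inclinationSin p).deriv]
    positivity

lemma inclinationSin_lt_one (p : ℝ) : inclinationSin p < 1 := by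
  rw [inclinationSin, div_lt_one (sqrt_pos.2 (by positivity))]
  exact lt_sqrt_of_sq_lt (by linarith)

lemma inclinationSin_div_sqrt {R t : ℝ} (hR : 0 < R) (ht : t ^ 2 < R ^ 2) :
    inclinationSin (t / √(R ^ 2 - t ^ 2)) = t / R := by
  have hw : 0 < R ^ 2 - t ^ 2 := sub_pos.2 ht
  have hs : 0 < √(R ^ 2 - t ^ 2) := sqrt_pos.2 hw
  have key : 1 + (t / √(R ^ 2 - t ^ 2)) ^ 2 = (R / √(R ^ 2 - t ^ 2)) ^ 2 := by
    rw [div_pow, div_pow, sq_sqrt hw.le]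
    field_simp
    ring
  rw [inclinationSin, key, sqrt_sq (by positivity)]
  field_simp

/-- The lower arc of the circle of radius `R` centred at `(0, R)`. -/
noncomputable def circleArc (R t : ℝ) : ℝ := R - √(R ^ 2 - t ^ 2)

lemma circleArc_zero {R : ℝ} (hR : 0 ≤ R) : circleArc R 0 = 0 := by
  simp [circleArc, sqrt_sq hR]

lemma circleArc_inv {c r : ℝ} (hc : 0 < c) (hr0 : 0 ≤ r) (hr : r ≤ c⁻¹) :
    circleArc c⁻¹ r = r ^ 2 * c / (1 + √(1 - r ^ 2 * c ^ 2)) := by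
  replace hr : r ^ 2 * c ^ 2 ≤ 1 := by
    rw [← mul_pow]
    refine pow_le_one₀ (mul_nonneg hr0 hc.le) ?_
    simpa [inv_mul_cancel₀ hc.ne'] using mul_le_mul_of_nonneg_right hr hc.le
  have hsplit : c⁻¹ ^ 2 - r ^ 2 = (1 - r ^ 2 * c ^ 2) * c⁻¹ ^ 2 := by
    field_simp
  have hs := sq_sqrt (sub_nonneg.2 hr)
  rw [circleArc, hsplit, sqrt_mul (sub_nonneg.2 hr), sqrt_sq (inv_nonneg.2 hc.le)]
  have hs0 := sqrt_nonneg (1 - r ^ 2 * c ^ 2)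
  generalize √(1 - r ^ 2 * c ^ 2) = s at hs hs0 ⊢
  rw [eq_div_iff (by positivity)]
  field_simp
  linear_combination -hs

lemma continuous_circleArc (R : ℝ) : Continuous (circleArc R) := by
  unfold circleArc
  fun_prop

lemma hasDerivAt_circleArc {R t : ℝ} (ht : t ^ 2 < R ^ 2) :
    HasDerivAt (circleArc R) (t / √(R ^ 2 - t ^ 2)) t := by
  refine (((hasDerivAt_pow 2 t).const_sub (R ^ 2)).sqrt (sub_pos.2 ht).ne'
    |>.const_sub R).congr_deriv ?_
  field_simp
  ring

section CircleComparison

variable {u : ℝ → ℝ} {R T : ℝ}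

lemma strictMonoOn_sub_circleArc (hu : Differentiable ℝ u) (hR : 0 < R) (hT : T ≤ R)
    (h : ∀ t ∈ Ioo 0 T, t / R < inclinationSin (deriv u t)) :
    StrictMonoOn (fun t => u t - circleArc R t) (Icc 0 T) := by
  refine strictMonoOn_of_deriv_pos (convex_Icc 0 T)
    (hu.continuous.sub (continuous_circleArc R)).continuousOn fun t ht => ?_
  rw [interior_Icc] at ht
  have ht2 : t ^ 2 < R ^ 2 := pow_lt_pow_left₀ (ht.2.trans_le hT) ht.1.le two_ne_zero
  rw [((hu t).hasDerivAt.fun_sub (hasDerivAt_circleArc ht2)).deriv, sub_pos,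
    ← strictMono_inclinationSin.lt_iff_lt, inclinationSin_div_sqrt hR ht2]
  exact h t ht

lemma strictAntiOn_sub_circleArc (hu : Differentiable ℝ u) (hR : 0 < R) (hT : T ≤ R)
    (h : ∀ t ∈ Ioo 0 T, inclinationSin (deriv u t) < t / R) :
    StrictAntiOn (fun t => u t - circleArc R t) (Icc 0 T) := by
  refine strictAntiOn_of_deriv_neg (convex_Icc 0 T)
    (hu.continuous.sub (continuous_circleArc R)).continuousOn fun t ht => ?_
  rw [interior_Icc] at ht
  have ht2 : t ^ 2 < R ^ 2 := pow_lt_pow_left₀ (ht.2.trans_le hT) ht.1.le two_ne_zero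
  rw [((hu t).hasDerivAt.fun_sub (hasDerivAt_circleArc ht2)).deriv, sub_neg,
    ← strictMono_inclinationSin.lt_iff_lt, inclinationSin_div_sqrt hR ht2]
  exact h t ht

end CircleComparison

section DerivStrictMono

variable {g w : ℝ → ℝ} {a t : ℝ}

lemma mul_lt_of_hasDerivAt_strictMonoOn (hg : ∀ t ∈ Icc 0 a, HasDerivAt g (w t) t)
    (hw : StrictMonoOn w (Icc 0 a)) (hg0 : g 0 = 0) (ht : t ∈ Ioc 0 a) : w 0 * t < g t := by
  have h := (convex_Icc 0 a).mul_sub_lt_image_sub_of_lt_deriv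
    (fun s hs => (hg s hs).continuousAt.continuousWithinAt)
    (fun s hs => (hg s (interior_subset hs)).differentiableAt.differentiableWithinAt)
    (C := w 0) (fun s hs => ?_) 0 (left_mem_Icc.2 (ht.1.le.trans ht.2)) t
    (Ioc_subset_Icc_self ht) ht.1
  · rwa [sub_zero, hg0, sub_zero] at h
  · rw [interior_Icc] at hs
    rw [(hg s (Ioo_subset_Icc_self hs)).deriv]
    exact hw (left_mem_Icc.2 (hs.1.trans hs.2).le) (Ioo_subset_Icc_self hs) hs.1

lemma lt_div_mul_of_hasDerivAt_strictMonoOn (hg : ∀ t ∈ Icc 0 a, HasDerivAt g (w t) t)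
    (hw : StrictMonoOn w (Icc 0 a)) (hg0 : g 0 = 0) (ht : t ∈ Ioo 0 a) : g t < t / a * g a := by
  have hconv : StrictConvexOn ℝ (Icc 0 a) g := by
    refine StrictMonoOn.strictConvexOn_of_deriv (convex_Icc 0 a)
      (fun s hs => (hg s hs).continuousAt.continuousWithinAt) ?_
    rw [interior_Icc]
    intro x hx y hy hxy
    rw [(hg x (Ioo_subset_Icc_self hx)).deriv, (hg y (Ioo_subset_Icc_self hy)).deriv]
    exact hw (Ioo_subset_Icc_self hx) (Ioo_subset_Icc_self hy) hxy
  have ha : 0 < a := ht.1.trans ht.2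
  have h := hconv.secant_strict_mono (left_mem_Icc.2 ha.le) (Ioo_subset_Icc_self ht)
    (right_mem_Icc.2 ha.le) ht.1.ne' ha.ne' ht.2
  rw [hg0, sub_zero, sub_zero, sub_zero, sub_zero, div_lt_div_iff₀ ht.1 ha] at h
  rw [div_mul_eq_mul_div, lt_div_iff₀ ha]
  linarith

end DerivStrictMono

lemma strictMonoOn_of_deriv_deriv_pos {u : ℝ → ℝ} {T : ℝ} (hu : Differentiable ℝ u)
    (hu' : Differentiable ℝ (deriv u)) (h0 : 0 ≤ deriv u 0)
    (h : ∀ t ∈ Ioo 0 T, 0 < deriv (deriv u) t) : StrictMonoOn u (Icc 0 T) := by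
  have hmono : StrictMonoOn (deriv u) (Icc 0 T) :=
    strictMonoOn_of_deriv_pos (convex_Icc 0 T) hu'.continuous.continuousOn (by rwa [interior_Icc])
  refine strictMonoOn_of_deriv_pos (convex_Icc 0 T) hu.continuous.continuousOn fun t ht => ?_
  rw [interior_Icc] at ht
  exact h0.trans_lt
    (hmono (left_mem_Icc.2 (ht.1.trans ht.2).le) (Ioo_subset_Icc_self ht) ht.1)

section Capillary

variable {κ a : ℝ} {u : ℝ → ℝ}

lemma strictMonoOn_of_capillary (hκ : 0 < κ) (hu : Differentiable ℝ u)
    (hu' : Differentiable ℝ (deriv u))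
    (hode : ∀ r ∈ Icc 0 a, deriv (deriv u) r = κ * u r * (1 + deriv u r ^ 2) ^ ((3 : ℝ) / 2))
    (hu0 : 0 < u 0) (hdu0 : deriv u 0 = 0) : StrictMonoOn u (Icc 0 a) := by
  have hmono : ∀ T ≤ a, (∀ t ∈ Ico 0 T, 0 < u t) → StrictMonoOn u (Icc 0 T) :=
    fun T hT hpos => strictMonoOn_of_deriv_deriv_pos hu hu' hdu0.ge fun t ht => by
      have := hpos t (Ioo_subset_Ico_self ht)
      rw [hode t ⟨ht.1.le, ht.2.le.trans hT⟩]
      positivity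
  suffices hpos : ∀ t ∈ Icc 0 a, 0 < u t from
    hmono a le_rfl fun t ht => hpos t (Ico_subset_Icc_self ht)
  by_contra! hneg
  obtain ⟨t, ht, hut⟩ := hneg
  obtain ⟨t₀, ⟨ht₀, hut₀ : u t₀ ≤ 0⟩, hleast⟩ :=
    (isCompact_Icc.inter_right (isClosed_le hu.continuous continuous_const)).exists_isLeast
      ⟨t, ht, hut⟩
  have ht₀pos : 0 < t₀ := ht₀.1.lt_of_ne (by rintro rfl; linarith)
  have hmono₀ := hmono t₀ ht₀.2 fun s hs => by
    by_contra! hus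
    exact (hleast ⟨⟨hs.1, hs.2.le.trans ht₀.2⟩, hus⟩).not_gt hs.2
  linarith [hmono₀ (left_mem_Icc.2 ht₀pos.le) (right_mem_Icc.2 ht₀pos.le) ht₀pos]

lemma hasDerivAt_inclinationSin_deriv {t : ℝ} (hu' : DifferentiableAt ℝ (deriv u) t)
    (hode : deriv (deriv u) t = κ * u t * (1 + deriv u t ^ 2) ^ ((3 : ℝ) / 2)) :
    HasDerivAt (fun s => inclinationSin (deriv u s)) (κ * u t) t := by
  refine ((hasDerivAt_inclinationSin _).comp t hu'.hasDerivAt).congr_deriv ?_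
  have hw : 0 < 1 + deriv u t ^ 2 := by positivity
  rw [hode, show (3 : ℝ) / 2 = 1 + 1 / 2 by norm_num, rpow_add hw, rpow_one, ← sqrt_eq_rpow]
  field_simp

lemma mul_lt_inclinationSin_of_capillary (hκ : 0 < κ) (hu : Differentiable ℝ u)
    (hu' : Differentiable ℝ (deriv u))
    (hode : ∀ r ∈ Icc 0 a, deriv (deriv u) r = κ * u r * (1 + deriv u r ^ 2) ^ ((3 : ℝ) / 2))
    (hu0 : 0 < u 0) (hdu0 : deriv u 0 = 0) {t : ℝ} (ht : t ∈ Ioc 0 a) :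
    κ * u 0 * t < inclinationSin (deriv u t) :=
  have hmono := strictMonoOn_of_capillary hκ hu hu' hode hu0 hdu0
  mul_lt_of_hasDerivAt_strictMonoOn
    (fun s hs => hasDerivAt_inclinationSin_deriv (hu' s) (hode s hs))
    (fun x hx y hy hxy => mul_lt_mul_of_pos_left (hmono hx hy hxy) hκ)
    (by simp [inclinationSin, hdu0]) ht

lemma inclinationSin_lt_of_capillary (hκ : 0 < κ) (hu : Differentiable ℝ u)
    (hu' : Differentiable ℝ (deriv u))
    (hode : ∀ r ∈ Icc 0 a, deriv (deriv u) r = κ * u r * (1 + deriv u r ^ 2) ^ ((3 : ℝ) / 2))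
    (hu0 : 0 < u 0) (hdu0 : deriv u 0 = 0) {t : ℝ} (ht : t ∈ Ioo 0 a) :
    inclinationSin (deriv u t) < t / a * inclinationSin (deriv u a) :=
  have hmono := strictMonoOn_of_capillary hκ hu hu' hode hu0 hdu0
  lt_div_mul_of_hasDerivAt_strictMonoOn
    (fun s hs => hasDerivAt_inclinationSin_deriv (hu' s) (hode s hs))
    (fun x hx y hy hxy => mul_lt_mul_of_pos_left (hmono hx hy hxy) hκ)
    (by simp [inclinationSin, hdu0]) ht

lemma sq_mul_div_lt_sub_of_capillary (hκ : 0 < κ) (hu : Differentiable ℝ u)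
    (hu' : Differentiable ℝ (deriv u))
    (hode : ∀ r ∈ Icc 0 a, deriv (deriv u) r = κ * u r * (1 + deriv u r ^ 2) ^ ((3 : ℝ) / 2))
    (hu0 : 0 < u 0) (hdu0 : deriv u 0 = 0) {r : ℝ} (hr : r ∈ Ioo 0 a) :
    r ^ 2 * (κ * u 0) / (1 + √(1 - r ^ 2 * (κ * u 0) ^ 2)) < u r - u 0 := by
  have ha : 0 < a := hr.1.trans hr.2
  have hc : 0 < κ * u 0 := mul_pos hκ hu0
  have hlow {t : ℝ} (ht : t ∈ Ioc 0 a) :=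
    mul_lt_inclinationSin_of_capillary hκ hu hu' hode hu0 hdu0 ht
  have haR : a < (κ * u 0)⁻¹ := by
    rw [lt_inv_comm₀ ha hc, ← one_div, lt_div_iff₀ ha]
    exact (hlow ⟨ha, le_rfl⟩).trans (inclinationSin_lt_one _)
  have h := strictMonoOn_sub_circleArc hu (inv_pos.2 hc) haR.le (fun t ht => by
      rw [div_inv_eq_mul, mul_comm]
      exact hlow (Ioo_subset_Ioc_self ht))
    (left_mem_Icc.2 ha.le) (Ioo_subset_Icc_self hr) hr.1
  dsimp only at h
  rw [circleArc_zero (inv_pos.2 hc).le, circleArc_inv hc hr.1.le (hr.2.trans haR).le] at h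
  linarith

lemma strictAntiOn_sub_circleArc_of_capillary (hκ : 0 < κ) (hu : Differentiable ℝ u)
    (hu' : Differentiable ℝ (deriv u))
    (hode : ∀ r ∈ Icc 0 a, deriv (deriv u) r = κ * u r * (1 + deriv u r ^ 2) ^ ((3 : ℝ) / 2))
    (hu0 : 0 < u 0) (hdu0 : deriv u 0 = 0) {R : ℝ} (hR : 0 < R)
    (hangle : inclinationSin (deriv u a) = a / R) :
    StrictAntiOn (fun t => u t - circleArc R t) (Icc 0 a) := by
  have haR : a ≤ R := ((div_lt_one hR).1 (hangle ▸ inclinationSin_lt_one _)).le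
  refine strictAntiOn_sub_circleArc hu hR haR fun t ht => ?_
  have h := inclinationSin_lt_of_capillary hκ hu hu' hode hu0 hdu0 ht
  rwa [hangle, div_mul_div_cancel₀ (ht.1.trans ht.2).ne'] at h

end Capillary

lemma sqrt_div_cos_sq_sub_sq {a γ : ℝ} (ha : 0 ≤ a) (hsin : 0 ≤ sin γ) (hcos : 0 < cos γ) :
    √(a ^ 2 / cos γ ^ 2 - a ^ 2) = a * (sin γ / cos γ) := by
  have h : a ^ 2 / cos γ ^ 2 - a ^ 2 = (a * (sin γ / cos γ)) ^ 2 := by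
    field_simp
    linear_combination -a ^ 2 * sin_sq_add_cos_sq γ
  rw [h, sqrt_sq (mul_nonneg ha (div_nonneg hsin hcos.le))]

/-- Meniscus estimates: for every r ∈ (0, a):
(i) r²κu₀/(1 + √(1 − r²κ²u₀²)) < u(r) − u₀ < a/cos γ − √(a²/cos²γ − r²), and
(ii) u(a) + a sin γ/cos γ − √(a²/cos²γ − r²) < u(r). -/
theorem stmt_15 (κ a u₀ γ : ℝ) (hκ : 0 < κ) (ha : 0 < a) (u : ℝ → ℝ)
    (hu : Differentiable ℝ u) (hu' : Differentiable ℝ (deriv u))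
    (hode : ∀ r ∈ Set.Icc (0 : ℝ) a,
      deriv (deriv u) r = κ * u r * (1 + (deriv u r) ^ 2) ^ ((3 : ℝ) / 2))
    (hu0 : u 0 = u₀) (hu₀pos : 0 < u₀) (hdu0 : deriv u 0 = 0)
    (hγ0 : 0 ≤ γ) (hγ1 : γ < Real.pi / 2)
    (hangle : deriv u a / Real.sqrt (1 + (deriv u a) ^ 2) = Real.cos γ) :
    ∀ r ∈ Set.Ioo (0 : ℝ) a,
      (r ^ 2 * κ * u₀ / (1 + Real.sqrt (1 - r ^ 2 * κ ^ 2 * u₀ ^ 2)) < u r - u₀ ∧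
       u r - u₀ < a / Real.cos γ -
         Real.sqrt (a ^ 2 / (Real.cos γ) ^ 2 - r ^ 2)) ∧
      u a + a * (Real.sin γ / Real.cos γ) -
        Real.sqrt (a ^ 2 / (Real.cos γ) ^ 2 - r ^ 2) < u r := by
  intro r hr
  subst hu0
  have hcos : 0 < cos γ := cos_pos_of_mem_Ioo ⟨by linarith [pi_pos], hγ1⟩
  have hsin : 0 ≤ sin γ := sin_nonneg_of_nonneg_of_le_pi hγ0 (by linarith [pi_pos])
  have hlow := sq_mul_div_lt_sub_of_capillary hκ hu hu' hode hu₀pos hdu0 hr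
  have hanti := strictAntiOn_sub_circleArc_of_capillary hκ hu hu' hode hu₀pos hdu0
    (R := a / cos γ) (div_pos ha hcos) (by rwa [div_div_cancel₀ ha.ne'])
  have h0r := hanti (left_mem_Icc.2 ha.le) (Ioo_subset_Icc_self hr) hr.1
  have hra := hanti (Ioo_subset_Icc_self hr) (right_mem_Icc.2 ha.le) hr.2
  dsimp only at h0r hra
  rw [circleArc_zero (div_pos ha hcos).le] at h0r
  simp only [circleArc, div_pow] at h0r hra
  rw [sqrt_div_cos_sq_sub_sq ha.le hsin hcos] at hra
  simp only [mul_pow, ← mul_assoc] at hlow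
  exact ⟨⟨hlow, by linarith⟩, by linarith⟩
end
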